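/- Let V be a finite-dimensional real vector space carrying a reduced crystallographic root system Φ with a chosen base of simple roots α₁, …, α_r, Weyl group W, and coroots α∨ for α ∈ Φ. Call μ ∈ V dominant if ⟨α∨, μ⟩ ≥ 0 for every simple root α. If μ and λ are dominant and μ ≤ λ (i.e., λ − μ is a nonnegative real linear combination of the simple roots), then the convex hull of the orbit Wμ is contained in the convex hull of the orbit Wλ. -/

import Mathlib

open Function

/-- A choice of base (system of simple roots) for a root pairing: the simple roots are
linearly independent, the indexing is injective, and every root is either a nonnegative or a
nonpositive linear combination of the simple roots. -/
def RootPairing.IsBaseOf {ι V N : Type*} [AddCommGroup V] [Module ℝ V]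
    [AddCommGroup N] [Module ℝ N] {r : ℕ}
    (P : RootPairing ι ℝ V N) (b : Fin r → ι) : Prop :=
  Function.Injective b ∧
  LinearIndependent ℝ (fun i => P.root (b i)) ∧
  ∀ j : ι, (∃ c : Fin r → ℝ, (∀ i, 0 ≤ c i) ∧ P.root j = ∑ i, c i • P.root (b i)) ∨
           (∃ c : Fin r → ℝ, (∀ i, c i ≤ 0) ∧ P.root j = ∑ i, c i • P.root (b i))

/-!
Let `p` be a point of `Conv(Wλ)` nearest to `μ` for the `W`-invariant, positive definite
root form `B`. Minimality gives the variational inequality `B(μ - p, x - p) ≤ 0` for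
`x ∈ Conv(Wλ)`. Taking `x = s_α p` for a simple root `α`, dominance of `μ` forces
`B(μ - p, α) ≥ 0`, hence `B(μ - p, λ - μ) ≥ 0`; taking `x = λ` then gives
`B(μ - p, μ - p) ≤ 0`. So `μ = p ∈ Conv(Wλ)`, and `Conv(Wλ)` is convex and `W`-stable.
-/

open Set Pointwise

theorem LinearEquiv.finite_stabilizer_of_span_eq_top {R V : Type*} [CommRing R] [AddCommGroup V]
    [Module R V] {s : Set V} (hs : s.Finite) (hspan : Submodule.span R s = ⊤) :
    (MulAction.stabilizer (V ≃ₗ[R] V) s : Set (V ≃ₗ[R] V)).Finite := by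
  have : Finite s := hs.to_subtype
  have hmaps (g : MulAction.stabilizer (V ≃ₗ[R] V) s) (x : s) : g.1 x ∈ s :=
    (MulAction.mem_stabilizer_iff.mp g.2).subset (smul_mem_smul_set x.2)
  refine Set.finite_coe_iff.mp (Finite.of_injective
    (fun (g : MulAction.stabilizer (V ≃ₗ[R] V) s) (x : s) => (⟨g.1 x, hmaps g x⟩ : s)) ?_)
  intro g h hgh
  refine Subtype.ext (LinearEquiv.toLinearMap_injective (LinearMap.ext_on hspan fun x hx => ?_))
  simpa using congrArg Subtype.val (congrFun hgh ⟨x, hx⟩)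

theorem exists_isMinOn_convexHull {E : Type*} [AddCommGroup E] [Module ℝ E]
    [FiniteDimensional ℝ E] (B : LinearMap.BilinForm ℝ E) (μ : E) {s : Set E} (hs : s.Finite)
    (hne : s.Nonempty) :
    ∃ p ∈ convexHull ℝ s, IsMinOn (fun x => B (μ - x) (μ - x)) (convexHull ℝ s) p := by
  -- `E` carries no topology: the module topology makes `B` continuous and the hull compact.
  let _ : TopologicalSpace E := moduleTopology ℝ E
  have : IsModuleTopology ℝ E := ⟨rfl⟩
  have := IsModuleTopology.topologicalAddGroup ℝ E
  have hsub : Continuous fun x : E => μ - x := continuous_const.sub continuous_id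
  have hcont : Continuous fun x => B (μ - x) (μ - x) :=
    (IsModuleTopology.continuous_bilinear_of_finite_left B).comp (hsub.prodMk hsub)
  exact (hs.isCompact_convexHull ℝ).exists_isMinOn hne.convexHull hcont.continuousOn

theorem LinearMap.IsSymm.apply_sub_nonpos_of_isMinOn {E : Type*} [AddCommGroup E]
    [Module ℝ E] {B : LinearMap.BilinForm ℝ E} (hB : LinearMap.IsSymm B) {C : Set E}
    (hC : Convex ℝ C) {μ p x : E} (hp : p ∈ C) (hx : x ∈ C)
    (hmin : IsMinOn (fun y => B (μ - y) (μ - y)) C p) :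
    B (μ - p) (x - p) ≤ 0 := by
  have hexp (f d : E) (τ : ℝ) :
      B (f - τ • d) (f - τ • d) = B f f - 2 * τ * B f d + τ ^ 2 * B d d := by
    have hdf : B d f = B f d := hB.eq d f
    simp only [map_sub, map_smul, LinearMap.sub_apply, LinearMap.smul_apply, smul_eq_mul, hdf]
    ring
  have hstep (τ : ℝ) (h0 : 0 < τ) (h1 : τ ≤ 1) :
      2 * B (μ - p) (x - p) ≤ τ * B (x - p) (x - p) := by
    have hle : B (μ - p) (μ - p) ≤ B (μ - (p + τ • (x - p))) (μ - (p + τ • (x - p))) :=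
      hmin (hC.add_smul_sub_mem hp hx ⟨h0.le, h1⟩)
    rw [sub_add_eq_sub_sub, hexp] at hle
    nlinarith
  by_contra! hpos
  set K := |B (x - p) (x - p)| + 1
  have hK : 0 < K := by positivity
  have hτ0 : 0 < min 1 (B (μ - p) (x - p) / K) := lt_min one_pos (div_pos hpos hK)
  have hτ := hstep _ hτ0 (min_le_left _ _)
  have hτK : min 1 (B (μ - p) (x - p) / K) * K ≤ B (μ - p) (x - p) :=
    (le_div_iff₀ hK).mp (min_le_right _ _)
  nlinarith [le_abs_self (B (x - p) (x - p))]

theorem Subgroup.mapsTo_convexHull_image_apply {V : Type*} [AddCommGroup V] [Module ℝ V]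
    {G : Subgroup (V ≃ₗ[ℝ] V)} {g : V ≃ₗ[ℝ] V} (hg : g ∈ G) (y : V) :
    MapsTo g (convexHull ℝ ((fun w : V ≃ₗ[ℝ] V => w y) '' G))
      (convexHull ℝ ((fun w : V ≃ₗ[ℝ] V => w y) '' G)) := by
  intro x hx
  have hgx : g x ∈ (g : V →ₗ[ℝ] V) '' convexHull ℝ ((fun w : V ≃ₗ[ℝ] V => w y) '' G) :=
    mem_image_of_mem _ hx
  rw [LinearMap.image_convexHull] at hgx
  refine convexHull_mono ?_ hgx
  rintro _ ⟨_, ⟨w, hw, rfl⟩, rfl⟩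
  exact ⟨g * w, G.mul_mem hg hw, rfl⟩

theorem Subgroup.convexHull_image_apply_subset {V : Type*} [AddCommGroup V] [Module ℝ V]
    {G : Subgroup (V ≃ₗ[ℝ] V)} {x y : V}
    (hx : x ∈ convexHull ℝ ((fun w : V ≃ₗ[ℝ] V => w y) '' G)) :
    convexHull ℝ ((fun w : V ≃ₗ[ℝ] V => w x) '' G) ⊆
      convexHull ℝ ((fun w : V ≃ₗ[ℝ] V => w y) '' G) :=
  convexHull_min (by rintro _ ⟨w, hw, rfl⟩; exact G.mapsTo_convexHull_image_apply hw y hx)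
    (convex_convexHull ℝ _)

namespace RootPairing

section CommRing

variable {ι R M N : Type*} [CommRing R] [AddCommGroup M] [Module R M] [AddCommGroup N]
  [Module R N] (P : RootPairing ι R M N)

theorem closure_range_reflection_le_stabilizer :
    Subgroup.closure (range P.reflection) ≤ MulAction.stabilizer (M ≃ₗ[R] M) (range P.root) := by
  rw [Subgroup.closure_le]
  rintro _ ⟨i, rfl⟩
  exact (image_smul (a := P.reflection i)).symm.trans (P.reflection_image_eq i)

theorem finite_closure_range_reflection [Finite ι] [P.IsRootSystem] :
    (Subgroup.closure (range P.reflection) : Set (M ≃ₗ[R] M)).Finite :=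
  (LinearEquiv.finite_stabilizer_of_span_eq_top (finite_range P.root)
    IsRootSystem.span_root_eq_top).subset P.closure_range_reflection_le_stabilizer

theorem two_mul_rootForm_root_apply [Fintype ι] (i : ι) (y : M) :
    2 * P.RootForm (P.root i) y =
      P.RootForm (P.root i) (P.root i) * P.toLinearMap y (P.coroot i) := by
  have h := congrArg (P.toLinearMap y) (P.rootForm_self_smul_coroot i)
  rw [map_smul, map_nsmul, toLinearMap_apply_apply_Polarization, smul_eq_mul, nsmul_eq_mul] at h
  push_cast at h
  rw [← h, mul_comm]

end CommRing

variable {ι M N : Type*} [Fintype ι] [AddCommGroup M] [Module ℝ M] [AddCommGroup N]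
  [Module ℝ N] (P : RootPairing ι ℝ M N)

theorem rootForm_root_self_pos (i : ι) : 0 < P.RootForm (P.root i) (P.root i) :=
  P.rootForm_pos_of_ne_zero (Submodule.subset_span (mem_range_self i)) (P.ne_zero i)

theorem rootForm_sub_root_nonneg {i : ι} {μ p : M} (hμ : 0 ≤ P.toLinearMap μ (P.coroot i))
    (hvar : P.RootForm (μ - p) (P.reflection i p - p) ≤ 0) :
    0 ≤ P.RootForm (μ - p) (P.root i) := by
  have hpos := P.rootForm_root_self_pos i
  have hrefl : P.reflection i p - p = -P.toLinearMap p (P.coroot i) • P.root i := by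
    rw [reflection_apply, sub_sub_cancel_left, neg_smul]; rfl
  have hpair := P.two_mul_rootForm_root_apply i (μ - p)
  rw [LinearMap.map_sub₂] at hpair
  have hsymm : P.RootForm (μ - p) (P.root i) = P.RootForm (P.root i) (μ - p) :=
    P.rootForm_symmetric.eq _ _
  rw [hrefl, map_smul, smul_eq_mul, hsymm] at hvar
  rw [hsymm]
  by_contra! hneg
  have hlt : P.toLinearMap μ (P.coroot i) - P.toLinearMap p (P.coroot i) < 0 :=
    neg_of_mul_neg_right (by linarith) hpos.le
  nlinarith

end RootPairing

theorem stmt_5_general {ι V N : Type*} [Fintype ι] [AddCommGroup V] [Module ℝ V]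
    [FiniteDimensional ℝ V] [AddCommGroup N] [Module ℝ N]
    (P : RootPairing ι ℝ V N) [P.IsRootSystem]
    (r : ℕ) (b : Fin r → ι)
    (μ lam : V)
    (hμdom : ∀ i : Fin r, 0 ≤ P.toLinearMap μ (P.coroot (b i)))
    (hle : ∃ x : Fin r → ℝ, (∀ i, 0 ≤ x i) ∧ lam - μ = ∑ i, x i • P.root (b i)) :
    convexHull ℝ ((fun w : V ≃ₗ[ℝ] V => w μ) '' (Subgroup.closure (Set.range P.reflection) : Set (V ≃ₗ[ℝ] V))) ⊆
      convexHull ℝ ((fun w : V ≃ₗ[ℝ] V => w lam) '' (Subgroup.closure (Set.range P.reflection) : Set (V ≃ₗ[ℝ] V))) := by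
  set W := Subgroup.closure (Set.range P.reflection)
  set B := P.RootForm
  have hlam : lam ∈ (fun w : V ≃ₗ[ℝ] V => w lam) '' W := ⟨1, W.one_mem, rfl⟩
  obtain ⟨p, hp, hmin⟩ := exists_isMinOn_convexHull B μ
    (P.finite_closure_range_reflection.image _) ⟨lam, hlam⟩
  have hvar {x : V} (hx : x ∈ convexHull ℝ ((fun w : V ≃ₗ[ℝ] V => w lam) '' W)) :
      B (μ - p) (x - p) ≤ 0 :=
    P.rootForm_symmetric.apply_sub_nonpos_of_isMinOn (convex_convexHull ℝ _) hp hx hmin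
  have hdom (i : Fin r) : 0 ≤ B (μ - p) (P.root (b i)) :=
    P.rootForm_sub_root_nonneg (hμdom i)
      (hvar (W.mapsTo_convexHull_image_apply (Subgroup.subset_closure ⟨b i, rfl⟩) lam hp))
  obtain ⟨x, hx_nonneg, hx⟩ := hle
  have hμ_lam : 0 ≤ B (μ - p) (lam - μ) := by
    rw [hx, map_sum]
    exact Finset.sum_nonneg fun i _ => by
      rw [map_smul, smul_eq_mul]; exact mul_nonneg (hx_nonneg i) (hdom i)
  have hself : B (μ - p) (μ - p) = B (μ - p) (lam - p) - B (μ - p) (lam - μ) := by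
    rw [← map_sub, sub_sub_sub_cancel_left]
  have hzero : μ - p = 0 := P.rootForm_anisotropic _ <| by
    simpa using le_antisymm (by linarith [hvar (subset_convexHull ℝ _ hlam)])
      (P.zero_le_rootForm (μ - p))
  exact Subgroup.convexHull_image_apply_subset (sub_eq_zero.mp hzero ▸ hp)

/-- **Proposition (order), (a) ⇒ (b)**: Let `Φ` be a reduced crystallographic root system on
a finite-dimensional real vector space `V`, with base of simple roots `α₁, …, α_r`, coroots
`α∨`, and Weyl group `W`.  Call `μ` dominant when `⟨α∨, μ⟩ ≥ 0` for all simple roots `α`.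
If `μ` and `λ` are dominant and `λ - μ` is a nonnegative combination of the simple roots
(`μ ≤ λ`), then `Conv(Wμ) ⊆ Conv(Wλ)`. -/
theorem stmt_5 {ι V N : Type*} [Fintype ι] [AddCommGroup V] [Module ℝ V]
    [FiniteDimensional ℝ V] [AddCommGroup N] [Module ℝ N]
    (P : RootPairing ι ℝ V N) [P.IsRootSystem] (hcrys : P.IsCrystallographic) (hred : P.IsReduced)
    (r : ℕ) (b : Fin r → ι) (hb : P.IsBaseOf b)
    (μ lam : V)
    (hμdom : ∀ i : Fin r, 0 ≤ P.toLinearMap μ (P.coroot (b i)))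
    (hlamdom : ∀ i : Fin r, 0 ≤ P.toLinearMap lam (P.coroot (b i)))
    (hle : ∃ x : Fin r → ℝ, (∀ i, 0 ≤ x i) ∧ lam - μ = ∑ i, x i • P.root (b i)) :
    convexHull ℝ ((fun w : V ≃ₗ[ℝ] V => w μ) '' (Subgroup.closure (Set.range P.reflection) : Set (V ≃ₗ[ℝ] V))) ⊆
      convexHull ℝ ((fun w : V ≃ₗ[ℝ] V => w lam) '' (Subgroup.closure (Set.range P.reflection) : Set (V ≃ₗ[ℝ] V))) :=
  stmt_5_general P r b μ lam hμdom hle
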